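/- arXiv:1503.07056 — 3 statements merged into one kernel-verified Lean document; each statement's English description precedes it below -/
import Mathlib

section
/- Let F be a field of characteristic 2 and a ∈ F with a ≠ 0, and let x, y, J be as in the dimension-6 setup. Then there is no quadratic form Q : F⁶ → F invariant under x and y (i.e. Q(x·v) = Q(v) and Q(y·v) = Q(v) for all v ∈ F⁶) whose polar bilinear form satisfies Q(u+v) + Q(u) + Q(v) = uᵀ J v for all u, v ∈ F⁶. Consequently the group generated by x and y is not contained in an orthogonal group SO₆^±(q). -/
open Matrix

private lemma ev0 {α : Type*} (a b c d e f : α) : ![a,b,c,d,e,f] (0 : Fin 6) = a := rfl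
private lemma ev1 {α : Type*} (a b c d e f : α) : ![a,b,c,d,e,f] (1 : Fin 6) = b := rfl
private lemma ev2 {α : Type*} (a b c d e f : α) : ![a,b,c,d,e,f] (2 : Fin 6) = c := rfl
private lemma ev3 {α : Type*} (a b c d e f : α) : ![a,b,c,d,e,f] (3 : Fin 6) = d := rfl
private lemma ev4 {α : Type*} (a b c d e f : α) : ![a,b,c,d,e,f] (4 : Fin 6) = e := rfl
private lemma ev5 {α : Type*} (a b c d e f : α) : ![a,b,c,d,e,f] (5 : Fin 6) = f := rfl

/-- **The dimension-6 group preserves no quadratic form.** Let `F` be a field of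
characteristic `2` and `a ∈ F` with `a ≠ 0`, and let `x, y, J` be as in the dimension-6
setup. There is no quadratic form `Q` on `F⁶` invariant under `x` and `y` whose polar
form is the bilinear form of `J`, i.e. with `Q(u+v) + Q(u) + Q(v) = uᵀ J v` for all
`u, v`. (Consequently the group generated by `x` and `y` is not contained in an
orthogonal group `SO₆^±(q)`.) -/
theorem dim6_generators_preserve_no_quadratic_form (F : Type) [Field F] [CharP F 2]
    (a : F) (ha : a ≠ 0) (x y J : Matrix (Fin 6) (Fin 6) F)
    (hx : x = !![0,0,1,0,0,0; 0,0,0,1,0,0; 1,0,0,0,0,0; 0,1,0,0,0,0; 0,0,0,0,1,0; 0,0,0,0,a,1])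
    (hy : y = !![1,0,0,1,1,0; 0,1,0,0,0,0; 0,0,0,1,0,0; 0,0,1,1,0,0; 0,a,1,1,1,1; 0,a,1,0,1,0])
    (hJ : J = !![0,1,0,0,0,0; 1,0,0,a,a+1,1; 0,0,0,1,0,0; 0,a,1,0,1,1;
      0,a+1,0,1,0,1; 0,1,0,1,1,0]) :
    ¬ ∃ Q : QuadraticForm F (Fin 6 → F),
        (∀ v : Fin 6 → F, Q (x.mulVec v) = Q v) ∧
        (∀ v : Fin 6 → F, Q (y.mulVec v) = Q v) ∧
        (∀ u v : Fin 6 → F, Q (u + v) + Q u + Q v = u ⬝ᵥ J.mulVec v) := by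
  rintro ⟨Q, hxQ, hyQ, hpol⟩
  subst hx hy hJ
  have two : (2 : F) = 0 := by exact_mod_cast CharP.cast_eq_zero F 2
  -- Q e2 = Q e0
  have h2 : Q ![0,0,1,0,0,0] = Q ![1,0,0,0,0,0] := by
    have := hxQ ![1,0,0,0,0,0]
    rwa [show Matrix.mulVec _ _ = (![0,0,1,0,0,0] : Fin 6 → F) by
      funext i; fin_cases i <;>
        simp [Matrix.mulVec, dotProduct, Fin.sum_univ_six, Matrix.of_apply, ev0, ev1, ev2, ev3, ev4, ev5] <;> rfl] at this
  -- Q e4 = Q e5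
  have h3 : Q ![0,0,0,0,1,0] = Q ![0,0,0,0,0,1] := by
    have := hyQ ![0,0,0,0,0,1]
    rwa [show Matrix.mulVec _ _ = (![0,0,0,0,1,0] : Fin 6 → F) by
      funext i; fin_cases i <;>
        simp [Matrix.mulVec, dotProduct, Fin.sum_univ_six, Matrix.of_apply, ev0, ev1, ev2, ev3, ev4, ev5] <;> rfl] at this
  -- y e3 = e0+e2+e3+e4
  have h4 : Q ((![1,0,0,0,0,0] + ![0,0,1,0,0,0]) + (![0,0,0,1,0,0] + ![0,0,0,0,1,0]))
      = Q ![0,0,0,1,0,0] := by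
    have := hyQ ![0,0,0,1,0,0]
    rwa [show Matrix.mulVec _ _ =
        ((![1,0,0,0,0,0] + ![0,0,1,0,0,0]) + (![0,0,0,1,0,0] + ![0,0,0,0,1,0]) : Fin 6 → F) by
      funext i; fin_cases i <;>
        simp [Matrix.mulVec, dotProduct, Fin.sum_univ_six, Matrix.of_apply, ev0, ev1, ev2, ev3, ev4, ev5] <;> rfl] at this
  have p1 := hpol (![1,0,0,0,0,0] + ![0,0,1,0,0,0]) (![0,0,0,1,0,0] + ![0,0,0,0,1,0])
  have p2 := hpol ![1,0,0,0,0,0] ![0,0,1,0,0,0]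
  have p3 := hpol ![0,0,0,1,0,0] ![0,0,0,0,1,0]
  have d1 : ((![1,0,0,0,0,0] + ![0,0,1,0,0,0] : Fin 6 → F)) ⬝ᵥ
      Matrix.mulVec !![0,1,0,0,0,0; 1,0,0,a,a+1,1; 0,0,0,1,0,0; 0,a,1,0,1,1;
        0,a+1,0,1,0,1; 0,1,0,1,1,0] (![0,0,0,1,0,0] + ![0,0,0,0,1,0]) = 1 := by
    simp [Matrix.mulVec, dotProduct, Fin.sum_univ_six, Matrix.of_apply, ev0, ev1, ev2, ev3, ev4, ev5]
  have d2 : (![1,0,0,0,0,0] : Fin 6 → F) ⬝ᵥ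
      Matrix.mulVec !![0,1,0,0,0,0; 1,0,0,a,a+1,1; 0,0,0,1,0,0; 0,a,1,0,1,1;
        0,a+1,0,1,0,1; 0,1,0,1,1,0] ![0,0,1,0,0,0] = 0 := by
    simp [Matrix.mulVec, dotProduct, Fin.sum_univ_six, Matrix.of_apply, ev0, ev1, ev2, ev3, ev4, ev5]
  have d3 : (![0,0,0,1,0,0] : Fin 6 → F) ⬝ᵥ
      Matrix.mulVec !![0,1,0,0,0,0; 1,0,0,a,a+1,1; 0,0,0,1,0,0; 0,a,1,0,1,1;
        0,a+1,0,1,0,1; 0,1,0,1,1,0] ![0,0,0,0,1,0] = 1 := by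
    simp [Matrix.mulVec, dotProduct, Fin.sum_univ_six, Matrix.of_apply, ev0, ev1, ev2, ev3, ev4, ev5]
  rw [d1] at p1; rw [d2] at p2; rw [d3] at p3
  -- hence Q e4 = 0
  have hQ4 : Q ![0,0,0,0,1,0] = 0 := by linear_combination p1 + p2 + p3 - h4 - h2 -
    (Q (![1,0,0,0,0,0] + ![0,0,1,0,0,0]) + Q (![0,0,0,1,0,0] + ![0,0,0,0,1,0]) +
      Q ![1,0,0,0,0,0] + Q ![0,0,0,1,0,0] - 1) * two
  -- x e4 = e4 + a e5
  have h1 : Q (![0,0,0,0,1,0] + a • ![0,0,0,0,0,1]) = Q ![0,0,0,0,1,0] := by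
    have := hxQ ![0,0,0,0,1,0]
    rwa [show Matrix.mulVec _ _ =
        ((![0,0,0,0,1,0] : Fin 6 → F) + a • ![0,0,0,0,0,1]) by
      funext i; fin_cases i <;>
        simp [Matrix.mulVec, dotProduct, Fin.sum_univ_six, Matrix.of_apply, ev0, ev1, ev2, ev3, ev4, ev5] <;> rfl] at this
  have p4 := hpol ![0,0,0,0,1,0] (a • ![0,0,0,0,0,1])
  have d4 : (![0,0,0,0,1,0] : Fin 6 → F) ⬝ᵥ
      Matrix.mulVec !![0,1,0,0,0,0; 1,0,0,a,a+1,1; 0,0,0,1,0,0; 0,a,1,0,1,1;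
        0,a+1,0,1,0,1; 0,1,0,1,1,0] (a • ![0,0,0,0,0,1]) = a := by
    simp [Matrix.mulVec, dotProduct, Fin.sum_univ_six, Matrix.of_apply, ev0, ev1, ev2, ev3, ev4, ev5]
  rw [d4] at p4
  have hs : Q (a • ![0,0,0,0,0,1]) = a * a * Q ![0,0,0,0,0,1] :=
    QuadraticMap.map_smul Q a _
  -- derive a = 0
  apply ha
  have h5 : Q ![0,0,0,0,0,1] = 0 := by rw [← h3, hQ4]
  linear_combination h1 - p4 + hs + a*a*h5 + Q ![0,0,0,0,1,0] * two
end

section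
/- Let F_q be a finite field and a ∈ F_q, set b = a, and suppose a, b satisfy Condition (i) and Condition (ii). Let x, y be the 7×7 matrices of the dimension-7 setup over F_q. Then there exists an invertible symmetric 7×7 matrix J over F_q (Jᵀ = J, det J ≠ 0) with xᵀ J x = J and yᵀ J y = J; that is, the group generated by x and y is contained in an orthogonal group SO_7(q). -/
open Matrix

@[simp] lemma my_cons_val_five {α : Type*} {m : ℕ} (x : α) (u : Fin (m+5) → α) :
    vecCons x u 5 = vecHead (vecTail (vecTail (vecTail (vecTail u)))) := rfl

@[simp] lemma my_cons_val_six {α : Type*} {m : ℕ} (x : α) (u : Fin (m+6) → α) :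
    vecCons x u 6 = vecHead (vecTail (vecTail (vecTail (vecTail (vecTail u))))) := rfl

lemma fmk0 (h : 0 < 7) : (⟨0, h⟩ : Fin 7) = 0 := rfl
lemma fmk1 (h : 1 < 7) : (⟨1, h⟩ : Fin 7) = 1 := rfl
lemma fmk2 (h : 2 < 7) : (⟨2, h⟩ : Fin 7) = 2 := rfl
lemma fmk3 (h : 3 < 7) : (⟨3, h⟩ : Fin 7) = 3 := rfl
lemma fmk4 (h : 4 < 7) : (⟨4, h⟩ : Fin 7) = 4 := rfl
lemma fmk5 (h : 5 < 7) : (⟨5, h⟩ : Fin 7) = 5 := rfl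
lemma fmk6 (h : 6 < 7) : (⟨6, h⟩ : Fin 7) = 6 := rfl

set_option maxHeartbeats 4000000 in
set_option maxRecDepth 16000 in
/-- **`⟨x,y⟩ ≤ SO_7(q)`.** Let `F_q` be a finite field and `a ∈ F_q` with `b = a`
satisfying Conditions (i) and (ii). Then the matrices `x, y` of the dimension-7 setup
preserve a nondegenerate symmetric bilinear form: there is an invertible symmetric matrix
`J` with `xᵀ J x = J` and `yᵀ J y = J`. -/
theorem dim7_orthogonal_invariant_form (F : Type) [Field F] [Fintype F] (a : F)
    (hi : a ^ 2 - a * a + a ^ 2 + 2 * a + 2 * a + 4 ≠ 0)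
    (hii : (a + a) ^ 3 - 8 * (a + a - 2) ^ 2 - 8 * (a * a) ≠ 0)
    (x y : Matrix (Fin 7) (Fin 7) F)
    (hx : x = !![0,1,0,0,0,0,a; 1,0,0,0,0,0,a; 0,0,0,1,0,0,0; 0,0,1,0,0,0,0;
      0,0,0,0,0,1,-1; 0,0,0,0,1,0,-1; 0,0,0,0,0,0,-1])
    (hy : y = !![1,0,-1,0,-1,0,a+a-1; 0,0,-1,0,0,0,0; 0,1,-1,0,0,0,0; 0,0,0,0,-1,0,0;
      0,0,0,1,-1,0,0; 0,0,0,0,0,0,-1; 0,0,0,0,0,1,-1]) :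
    ∃ J : Matrix (Fin 7) (Fin 7) F, Jᵀ = J ∧ J.det ≠ 0 ∧
      xᵀ * J * x = J ∧ yᵀ * J * y = J := by
  set D : F := ((a + a) ^ 3 - 8 * (a + a - 2) ^ 2 - 8 * (a * a)) ^ 2
      * (a ^ 2 - a * a + a ^ 2 + 2 * a + 2 * a + 4) with hD
  have hDne : D ≠ 0 := mul_ne_zero (pow_ne_zero _ hii) hi
  set J : Matrix (Fin 7) (Fin 7) F :=
    !![3, -1, -1, -1, -1, 2*a-1, 2*a-1;
       -1, 3, -1, -1, 2*a-1, -1, 3-2*a;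
       -1, -1, 3, 3-2*a, -1, -1, -1;
       -1, -1, 3-2*a, 3, -1, -1, 3-2*a;
       -1, 2*a-1, -1, -1, 3, -1, -1;
       2*a-1, -1, -1, -1, -1, 3, 2*a*a-2*a-1;
       2*a-1, 3-2*a, -1, 3-2*a, -1, 2*a*a-2*a-1, 3] with hJ
  set K : Matrix (Fin 7) (Fin 7) F :=
    !![-1024*a + 3072*a^2 - 4096*a^3 + 2816*a^4 - 448*a^5 - 640*a^6 + 384*a^7 - 64*a^8, -1024 + 2560*a - 2560*a^2 + 1280*a^3 - 64*a^4 - 352*a^5 + 192*a^6 - 32*a^7, -1024 + 3072*a - 3584*a^2 + 1792*a^3 + 64*a^4 - 512*a^5 + 224*a^6 - 32*a^7, -1536*a + 3584*a^2 - 2560*a^3 + 128*a^4 + 608*a^5 - 256*a^6 + 32*a^7, -1024 + 2048*a - 512*a^2 - 1280*a^3 + 832*a^4 + 64*a^5 - 160*a^6 + 32*a^7, -1024 + 1536*a + 1024*a^2 - 2816*a^3 + 1216*a^4 + 352*a^5 - 352*a^6 + 64*a^7, -512*a + 2048*a^2 - 2560*a^3 + 896*a^4 + 416*a^5 - 352*a^6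 + 64*a^7;
   -1024 + 2560*a - 2560*a^2 + 1280*a^3 - 64*a^4 - 352*a^5 + 192*a^6 - 32*a^7, -1024*a + 2048*a^2 - 1024*a^3 - 256*a^4 + 320*a^5 - 64*a^6, -512*a + 1024*a^2 - 512*a^3 - 128*a^4 + 160*a^5 - 32*a^6, -1024 + 2048*a - 1024*a^2 - 256*a^3 + 320*a^4 - 64*a^5, -1024 + 2048*a - 512*a^2 - 1280*a^3 + 832*a^4 + 64*a^5 - 160*a^6 + 32*a^7, -1024 + 2560*a - 2048*a^2 + 256*a^3 + 448*a^4 - 224*a^5 + 32*a^6, 512*a - 1024*a^2 + 512*a^3 + 128*a^4 - 160*a^5 + 32*a^6;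
   -1024 + 3072*a - 3584*a^2 + 1792*a^3 + 64*a^4 - 512*a^5 + 224*a^6 - 32*a^7, -512*a + 1024*a^2 - 512*a^3 - 128*a^4 + 160*a^5 - 32*a^6, -1024*a + 2048*a^2 - 1024*a^3 - 256*a^4 + 320*a^5 - 64*a^6, -512*a^2 + 1024*a^3 - 512*a^4 - 128*a^5 + 160*a^6 - 32*a^7, -1024 + 2048*a - 1024*a^2 - 256*a^3 + 320*a^4 - 64*a^5, -1024 + 2048*a - 1024*a^2 - 256*a^3 + 320*a^4 - 64*a^5, -1024 + 2560*a - 2048*a^2 + 256*a^3 + 448*a^4 - 224*a^5 + 32*a^6;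
   -1536*a + 3584*a^2 - 2560*a^3 + 128*a^4 + 608*a^5 - 256*a^6 + 32*a^7, -1024 + 2048*a - 1024*a^2 - 256*a^3 + 320*a^4 - 64*a^5, -512*a^2 + 1024*a^3 - 512*a^4 - 128*a^5 + 160*a^6 - 32*a^7, -1024*a + 2048*a^2 - 1024*a^3 - 256*a^4 + 320*a^5 - 64*a^6, -512*a + 1024*a^2 - 512*a^3 - 128*a^4 + 160*a^5 - 32*a^6, -512*a + 1024*a^2 - 512*a^3 - 128*a^4 + 160*a^5 - 32*a^6, 1024 - 2560*a + 2048*a^2 - 256*a^3 - 448*a^4 + 224*a^5 - 32*a^6;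
   -1024 + 2048*a - 512*a^2 - 1280*a^3 + 832*a^4 + 64*a^5 - 160*a^6 + 32*a^7, -1024 + 2048*a - 512*a^2 - 1280*a^3 + 832*a^4 + 64*a^5 - 160*a^6 + 32*a^7, -1024 + 2048*a - 1024*a^2 - 256*a^3 + 320*a^4 - 64*a^5, -512*a + 1024*a^2 - 512*a^3 - 128*a^4 + 160*a^5 - 32*a^6, -1024*a + 2048*a^2 - 1024*a^3 - 256*a^4 + 320*a^5 - 64*a^6, -1024 + 2048*a - 1024*a^2 - 256*a^3 + 320*a^4 - 64*a^5, -512*a + 1024*a^2 - 512*a^3 - 128*a^4 + 160*a^5 - 32*a^6;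
   -1024 + 1536*a + 1024*a^2 - 2816*a^3 + 1216*a^4 + 352*a^5 - 352*a^6 + 64*a^7, -1024 + 2560*a - 2048*a^2 + 256*a^3 + 448*a^4 - 224*a^5 + 32*a^6, -1024 + 2048*a - 1024*a^2 - 256*a^3 + 320*a^4 - 64*a^5, -512*a + 1024*a^2 - 512*a^3 - 128*a^4 + 160*a^5 - 32*a^6, -1024 + 2048*a - 1024*a^2 - 256*a^3 + 320*a^4 - 64*a^5, -1024*a + 2048*a^2 - 1024*a^3 - 256*a^4 + 320*a^5 - 64*a^6, -512*a + 1024*a^2 - 512*a^3 - 128*a^4 + 160*a^5 - 32*a^6;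
   -512*a + 2048*a^2 - 2560*a^3 + 896*a^4 + 416*a^5 - 352*a^6 + 64*a^7, 512*a - 1024*a^2 + 512*a^3 + 128*a^4 - 160*a^5 + 32*a^6, -1024 + 2560*a - 2048*a^2 + 256*a^3 + 448*a^4 - 224*a^5 + 32*a^6, 1024 - 2560*a + 2048*a^2 - 256*a^3 - 448*a^4 + 224*a^5 - 32*a^6, -512*a + 1024*a^2 - 512*a^3 - 128*a^4 + 160*a^5 - 32*a^6, -512*a + 1024*a^2 - 512*a^3 - 128*a^4 + 160*a^5 - 32*a^6, -1024*a + 2048*a^2 - 1024*a^3 - 256*a^4 + 320*a^5 - 64*a^6] with hK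
  have hJK : J * K = D • (1 : Matrix (Fin 7) (Fin 7) F) := by
    ext i j
    fin_cases i <;> fin_cases j <;>
      · simp only [hJ, hK, hD, Matrix.mul_apply, Fin.sum_univ_seven,
          fmk0, fmk1, fmk2, fmk3, fmk4, fmk5, fmk6, Matrix.of_apply, Matrix.smul_apply,
          Matrix.one_apply, Matrix.cons_val', Matrix.cons_val_zero, Matrix.cons_val_one,
          Matrix.cons_val_two, Matrix.cons_val_three, Matrix.cons_val_four, my_cons_val_five,
          my_cons_val_six, Matrix.head_cons, Matrix.tail_cons, Matrix.head_fin_const,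
          Matrix.empty_val', if_true, if_false, smul_eq_mul, Fin.reduceEq, reduceIte]
        ring
  have hdet : J.det ≠ 0 := by
    intro h
    have h1 : J.det * K.det = D ^ 7 := by
      rw [← Matrix.det_mul, hJK, Matrix.smul_one_eq_diagonal, Matrix.det_diagonal]
      simp [Finset.prod_const, Finset.card_univ]
    rw [h, zero_mul] at h1
    exact pow_ne_zero 7 hDne h1.symm
  refine ⟨J, ?_, hdet, ?_, ?_⟩
  · ext i j
    fin_cases i <;> fin_cases j <;> rfl
  · subst hx
    have h1 : (!![0,1,0,0,0,0,a; 1,0,0,0,0,0,a; 0,0,0,1,0,0,0; 0,0,1,0,0,0,0;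
      0,0,0,0,0,1,-1; 0,0,0,0,1,0,-1; 0,0,0,0,0,0,-1] : Matrix (Fin 7) (Fin 7) F)ᵀ * J
        = !![-1, 3, -1, -1, -1 + 2*a, -1, 3 - 2*a;
             3, -1, -1, -1, -1, -1 + 2*a, -1 + 2*a;
             -1, -1, 3 - 2*a, 3, -1, -1, 3 - 2*a;
             -1, -1, 3, 3 - 2*a, -1, -1, -1;
             -1 + 2*a, -1, -1, -1, -1, 3, -1 - 2*a + 2*a^2;
             -1, -1 + 2*a, -1, -1, 3, -1, -1;
             3 - 2*a, -1 + 2*a, 3 - 2*a, -1, -1 - 2*a + 2*a^2, -1, -1 + 4*a - 2*a^2] := by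
      ext i j
      fin_cases i <;> fin_cases j <;>
        · simp only [hJ, Matrix.mul_apply, Fin.sum_univ_seven, Matrix.transpose_apply,
            fmk0, fmk1, fmk2, fmk3, fmk4, fmk5, fmk6, Matrix.of_apply,
            Matrix.cons_val', Matrix.cons_val_zero, Matrix.cons_val_one, Matrix.cons_val_two,
            Matrix.cons_val_three, Matrix.cons_val_four, my_cons_val_five, my_cons_val_six,
            Matrix.head_cons, Matrix.tail_cons, Matrix.head_fin_const, Matrix.empty_val']
          ring
    rw [h1]
    ext i j
    fin_cases i <;> fin_cases j <;>
      · simp only [hJ, Matrix.mul_apply, Fin.sum_univ_seven,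
          fmk0, fmk1, fmk2, fmk3, fmk4, fmk5, fmk6, Matrix.of_apply,
          Matrix.cons_val', Matrix.cons_val_zero, Matrix.cons_val_one, Matrix.cons_val_two,
          Matrix.cons_val_three, Matrix.cons_val_four, my_cons_val_five, my_cons_val_six,
          Matrix.head_cons, Matrix.tail_cons, Matrix.head_fin_const, Matrix.empty_val']
        ring
  · subst hy
    have h1 : (!![1,0,-1,0,-1,0,a+a-1; 0,0,-1,0,0,0,0; 0,1,-1,0,0,0,0; 0,0,0,0,-1,0,0;
      0,0,0,1,-1,0,0; 0,0,0,0,0,0,-1; 0,0,0,0,0,1,-1] : Matrix (Fin 7) (Fin 7) F)ᵀ * J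
        = !![3, -1, -1, -1, -1, -1 + 2*a, -1 + 2*a;
             -1, -1, 3, 3 - 2*a, -1, -1, -1;
             -1, -1, -1, -1 + 2*a, 3 - 2*a, 3 - 2*a, -1;
             -1, -1 + 2*a, -1, -1, 3, -1, -1;
             -1, 3 - 2*a, -1 + 2*a, -1, -1, 3 - 2*a, -1;
             -1 + 2*a, 3 - 2*a, -1, 3 - 2*a, -1, -1 - 2*a + 2*a^2, 3;
             -1 + 2*a, -1, 3 - 2*a, -1, 3 - 2*a, -1 - 2*a + 2*a^2, -1 - 2*a + 2*a^2] := by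
      ext i j
      fin_cases i <;> fin_cases j <;>
        · simp only [hJ, Matrix.mul_apply, Fin.sum_univ_seven, Matrix.transpose_apply,
            fmk0, fmk1, fmk2, fmk3, fmk4, fmk5, fmk6, Matrix.of_apply,
            Matrix.cons_val', Matrix.cons_val_zero, Matrix.cons_val_one, Matrix.cons_val_two,
            Matrix.cons_val_three, Matrix.cons_val_four, my_cons_val_five, my_cons_val_six,
            Matrix.head_cons, Matrix.tail_cons, Matrix.head_fin_const, Matrix.empty_val']
          ring
    rw [h1]
    ext i j
    fin_cases i <;> fin_cases j <;>
      · simp only [hJ, Matrix.mul_apply, Fin.sum_univ_seven,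
          fmk0, fmk1, fmk2, fmk3, fmk4, fmk5, fmk6, Matrix.of_apply,
          Matrix.cons_val', Matrix.cons_val_zero, Matrix.cons_val_one, Matrix.cons_val_two,
          Matrix.cons_val_three, Matrix.cons_val_four, my_cons_val_five, my_cons_val_six,
          Matrix.head_cons, Matrix.tail_cons, Matrix.head_fin_const, Matrix.empty_val']
        ring
end

section
/- Let F be a field and a, b ∈ F satisfying Condition (i) and Condition (ii), and let x, y be the 7×7 matrices of the dimension-7 setup. Then the group generated by x and y is not monomial: there is no basis (v₁,…,v₇) of F⁷ such that for each i there exist an index j and a scalar λ with x·vᵢ = λ·vⱼ, and for each i there exist an index j and a scalar μ with y·vᵢ = μ·vⱼ. -/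
/-!
In a basis on which `x` and `y` act monomially, they permute the basis lines by permutations
`σ` and `τ` with `σ² = τ³ = 1`, and `x * y` permutes them by `σ ∘ τ`. A cycle of length `k` of
a monomial operator contributes a factor `X ^ k - t` to every polynomial annihilating it; for the
characteristic polynomial of `x * y` this excludes cycles of length `≥ 3` under Condition (ii),
so `(σ ∘ τ)² = 1`. As `3 ∤ 7`, `τ` fixes some basis line `⟨v⟩`, and then `(σ ∘ τ)² = 1` makes it
fix the line `⟨x v⟩` too: both `v` and `x v` are eigenvectors of `y`. A direct computation shows that
Conditions (i) and (ii) exclude this.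
-/

open Matrix Polynomial Function Finset

theorem Function.exists_fixed_point_of_iterate_prime_eq_id {α : Type*} [Fintype α] {p : ℕ}
    [hp : Fact p.Prime] (hα : ¬p ∣ Fintype.card α) {f : α → α} (hf : f^[p] = id) :
    ∃ a, f a = a := by
  obtain ⟨q, rfl⟩ : ∃ q, p = q + 1 := ⟨p - 1, (Nat.sub_add_cancel hp.out.one_le).symm⟩
  let e : Equiv.Perm α :=
    ⟨f, f^[q], fun a ↦ by rw [← iterate_succ_apply, hf, id],
      fun a ↦ by rw [← iterate_succ_apply' f, hf, id]⟩
  have he : e ^ (q + 1) ^ 1 = 1 := by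
    rw [pow_one]
    exact Equiv.ext fun a ↦ by rw [Equiv.Perm.coe_pow]; exact congrFun hf a
  exact Equiv.Perm.exists_fixed_point_of_prime hα he

theorem Module.Basis.eq_of_smul_eq {ι K V : Type*} [Field K] [AddCommGroup V] [Module K V]
    (v : Module.Basis ι K V) {r : K} {i j : ι} (h : r • v i = v j) : i = j := by
  classical
  by_contra hij
  simpa [Finsupp.single_apply, hij] using congr(v.repr $h j)

namespace Module.End

variable {ι K V : Type*} [Field K] [AddCommGroup V] [Module K V]

def IsMonomial (f : Module.End K V) (v : Module.Basis ι K V) (σ : ι → ι) (c : ι → K) : Prop :=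
  ∀ i, f (v i) = c i • v (σ i)

namespace IsMonomial

variable {f g : Module.End K V} {v : Module.Basis ι K V} {σ τ : ι → ι} {c d : ι → K}

theorem mul (hf : IsMonomial f v σ c) (hg : IsMonomial g v τ d) :
    IsMonomial (f * g) v (σ ∘ τ) (fun i ↦ d i * c (τ i)) := fun i ↦ by
  rw [mul_apply, hg i, map_smul, hf (τ i), smul_smul, Function.comp_apply]

theorem pow (hf : IsMonomial f v σ c) (n : ℕ) :
    IsMonomial (f ^ n) v σ^[n] (fun i ↦ ∏ m ∈ range n, c (σ^[m] i)) := by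
  induction n with
  | zero => intro i; simp
  | succ n ih =>
    intro i
    simp only [pow_succ, (ih.mul hf) i, prod_range_succ', Function.comp_apply, iterate_succ_apply,
      iterate_zero_apply, mul_comm]

theorem coeff_ne_zero_of_pow_eq_one (hf : IsMonomial f v σ c) {n : ℕ} (hn : n ≠ 0)
    (h : f ^ n = 1) (i : ι) : c i ≠ 0 := by
  intro hc
  have hprod : ∏ m ∈ range n, c (σ^[m] i) = 0 :=
    prod_eq_zero (mem_range.2 (Nat.pos_of_ne_zero hn)) hc
  have hvi := hf.pow n i
  simp only [h, one_apply, hprod, zero_smul] at hvi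
  exact v.ne_zero i hvi

theorem iterate_eq_id (hf : IsMonomial f v σ c) {n : ℕ} (h : f ^ n = 1) : σ^[n] = id := by
  funext i
  have hvi := hf.pow n i
  rw [h, one_apply] at hvi
  exact v.eq_of_smul_eq hvi.symm

theorem injective_of_pow_eq_one (hf : IsMonomial f v σ c) {n : ℕ} (hn : n ≠ 0)
    (h : f ^ n = 1) : Function.Injective σ := by
  obtain ⟨q, rfl⟩ := Nat.exists_eq_succ_of_ne_zero hn
  exact LeftInverse.injective (g := σ^[q]) fun i ↦ by
    rw [← iterate_succ_apply, hf.iterate_eq_id h, id]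

/-- The sums are the coefficients of the remainder of `p` modulo `X ^ k - t`, where `k` is the
period of `i` and `t` the product of the coefficients of `f` around the cycle of `i`. -/
theorem exists_sum_coeff_mul_pow_eq_zero (hf : IsMonomial f v σ c) (hc : ∀ i, c i ≠ 0)
    {p : K[X]} (hp : aeval f p = 0) {N : ℕ} (hN : p.natDegree < N) {i : ι}
    (hi : i ∈ periodicPts σ) :
    ∃ t : K, ∀ r < minimalPeriod σ i, ∑ m ∈ range N with m % minimalPeriod σ i = r,
      p.coeff m * t ^ (m / minimalPeriod σ i) = 0 := by
  classical
  set k := minimalPeriod σ i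
  set μ : ℕ → K := fun m ↦ ∏ j ∈ range m, c (σ^[j] i)
  have hcycle : (f ^ k) (v i) = μ k • v i := by rw [hf.pow k i, iterate_minimalPeriod]
  have hpow : ∀ m, (f ^ m) (v i) = (μ k ^ (m / k) * μ (m % k)) • v (σ^[m % k] i) := by
    intro m
    have hq := (hasEigenvector_iff.2 ⟨mem_eigenspace_iff.2 hcycle, v.ne_zero i⟩).pow_apply
    conv_lhs => rw [← Nat.mod_add_div m k, pow_add, pow_mul, mul_apply, hq, map_smul, hf.pow]
    rw [smul_smul]
  refine ⟨μ k, fun r hr ↦ ?_⟩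
  have hμ : μ r ≠ 0 := prod_ne_zero_iff.2 fun j _ ↦ hc _
  have hsum : ∑ m ∈ range N, (p.coeff m * (μ k ^ (m / k) * μ (m % k))) • v (σ^[m % k] i) = 0 := by
    simpa [aeval_eq_sum_range' hN, hpow, smul_smul] using congr($hp (v i))
  have hk : 0 < k := minimalPeriod_pos_of_mem_periodicPts hi
  have hinj : ∀ m, σ^[m % k] i = σ^[r] i ↔ m % k = r := fun m ↦
    (iterate_injOn_Iio_minimalPeriod.eq_iff (Nat.mod_lt m hk) hr)
  have hcoord := congr(v.repr $hsum (σ^[r] i))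
  simp only [map_sum, map_smul, Module.Basis.repr_self, Finsupp.finsetSum_apply,
    Finsupp.smul_apply, Finsupp.single_apply, hinj, smul_eq_mul, mul_ite, mul_one, mul_zero,
    map_zero, Finsupp.coe_zero, Pi.zero_apply] at hcoord
  rw [← sum_filter] at hcoord
  apply (mul_eq_zero.1 _).resolve_right hμ
  rw [sum_mul, ← hcoord]
  refine sum_congr rfl fun m hm ↦ ?_
  rw [(mem_filter.1 hm).2]
  ring

end IsMonomial

end Module.End

theorem Matrix.one_fin_seven {α : Type*} [Zero α] [One α] :
    (1 : Matrix (Fin 7) (Fin 7) α) = !![1,0,0,0,0,0,0; 0,1,0,0,0,0,0; 0,0,1,0,0,0,0;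
      0,0,0,1,0,0,0; 0,0,0,0,1,0,0; 0,0,0,0,0,1,0; 0,0,0,0,0,0,1] := by
  ext i j
  fin_cases i <;> fin_cases j <;> rfl

namespace Dim7

variable {F : Type*} [Field F]

def x (a : F) : Matrix (Fin 7) (Fin 7) F :=
  !![0,1,0,0,0,0,a; 1,0,0,0,0,0,a; 0,0,0,1,0,0,0; 0,0,1,0,0,0,0;
    0,0,0,0,0,1,-1; 0,0,0,0,1,0,-1; 0,0,0,0,0,0,-1]

def y (a b : F) : Matrix (Fin 7) (Fin 7) F :=
  !![1,0,-1,0,-1,0,a+b-1; 0,0,-1,0,0,0,0; 0,1,-1,0,0,0,0; 0,0,0,0,-1,0,0;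
    0,0,0,1,-1,0,0; 0,0,0,0,0,0,-1; 0,0,0,0,0,1,-1]

/-- The characteristic polynomial of `x a * y a b`. -/
noncomputable def xyPoly (a b : F) : F[X] :=
  X ^ 7 - X ^ 5 - C (a - 1) * X ^ 4 - C (1 - b) * X ^ 3 + X ^ 2 - 1

theorem x_sq (a : F) : x a ^ 2 = 1 := by
  simp [x, sq, vecHead, vecTail, one_fin_seven]

theorem y_pow_three (a b : F) : y a b ^ 3 = 1 := by
  simp [y, pow_succ, vecHead, vecTail, one_fin_seven]

theorem x_mul_y (a b : F) : x a * y a b = !![0, 0, -1, 0, 0, a, -a;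
    1, 0, -1, 0, -1, a, b - 1;
    0, 0, 0, 0, -1, 0, 0;
    0, 1, -1, 0, 0, 0, 0;
    0, 0, 0, 0, 0, -1, 0;
    0, 0, 0, 1, -1, -1, 1;
    0, 0, 0, 0, 0, -1, 1] := by
  simp [x, y, vecHead, vecTail]
  ring

theorem x_mul_y_sq (a b : F) : (x a * y a b) ^ 2 = !![0, 0, 0, a, 1 - a, 0, 0;
    0, 0, -1, a, 1 - a, 2 - b, b - 1;
    0, 0, 0, 0, 0, 1, 0;
    1, 0, -1, 0, 0, a, b - 1;
    0, 0, 0, -1, 1, 1, -1;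
    0, 1, -1, -1, 1, 1, 0;
    0, 0, 0, -1, 1, 0, 0] := by
  rw [sq, x_mul_y]
  simp [vecHead, vecTail]
  and_intros <;> ring

theorem x_mul_y_pow_three (a b : F) : (x a * y a b) ^ 3 = !![0, a, -a, 0, 0, a - 1, 0;
    0, a, -a, 2 - b, b - 1, a - 2, 1;
    0, 0, 0, 1, -1, -1, 1;
    0, 0, -1, a, 1 - a, 1 - b, b - 1;
    0, -1, 1, 1, -1, -1, 0;
    1, -1, 0, 1, -1, a - 2, b;
    0, -1, 1, 0, 0, -1, 0] := by
  rw [pow_succ, x_mul_y_sq, x_mul_y]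
  simp [vecHead, vecTail]
  and_intros <;> ring

theorem x_mul_y_pow_four (a b : F) : (x a * y a b) ^ 4 =
    !![a, 0, -a, a - 1, 1 - a, a ^ 2 - a + 1, a * b - 1;
    a, 2 - b, b - a - 2, a - 2, 2 - a, a ^ 2 - b - a + 2, a * b - 1;
    0, 1, -1, -1, 1, 1, 0;
    0, a, -a, 1 - b, b, a - 1, 0;
    -1, 1, 0, -1, 1, 2 - a, -b;
    -1, 1, -1, a - 2, 3 - a, 3 - a - b, -1;
    -1, 0, 1, -1, 1, 1 - a, -b] := by
  rw [show (x a * y a b) ^ 4 = ((x a * y a b) ^ 2) ^ 2 by rw [← pow_mul], x_mul_y_sq, sq]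
  simp [vecHead, vecTail]
  and_intros <;> ring

theorem aeval_x_mul_y (a b : F) : aeval (x a * y a b) (xyPoly a b) = 0 := by
  have h : xyPoly a b = X ^ 3 * X ^ 4 - X ^ 2 * X ^ 3 - C (a - 1) * X ^ 4 - C (1 - b) * X ^ 3
      + X ^ 2 - 1 := by
    rw [xyPoly]; ring
  simp only [h, map_add, map_sub, map_mul, map_pow, aeval_X, aeval_C, map_one,
    Algebra.algebraMap_eq_smul_one, one_fin_seven, x_mul_y_pow_four, x_mul_y_pow_three, x_mul_y_sq]
  -- with `0` written as a literal, `simp` splits the equation into its entries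
  rw [← Matrix.of_zero]
  simp [vecHead, vecTail, -Matrix.of_zero]
  and_intros <;> ring

theorem natDegree_xyPoly_lt (a b : F) : (xyPoly a b).natDegree < 8 := by
  unfold xyPoly
  compute_degree!

theorem not_forall_sum_coeff_xyPoly_eq_zero {a b : F}
    (hii : (a + b) ^ 3 - 8 * (a + b - 2) ^ 2 - 8 * (a * b) ≠ 0) {k : ℕ} (hk : 3 ≤ k) (hk' : k ≤ 7)
    (t : F) : ¬ ∀ r < k, ∑ m ∈ range 8 with m % k = r, (xyPoly a b).coeff m * t ^ (m / k) = 0 := by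
  intro h
  interval_cases k <;>
    simp only [Nat.forall_lt_succ_right] at h <;>
    simp [sum_filter, sum_range_succ, xyPoly, coeff_one, coeff_C_mul, -map_sub] at h
  · obtain ⟨⟨h0, h1⟩, h2⟩ := h
    obtain rfl : t = 1 := by linear_combination -h2
    obtain rfl : a = 2 := by linear_combination -h1
    obtain rfl : b = 2 := by linear_combination h0
    norm_num at hii
  · obtain ⟨⟨-, hb⟩, ha⟩ := h
    obtain rfl : a = 1 := by linear_combination -ha
    obtain rfl : b = 1 := by linear_combination hb
    norm_num at hii

theorem mulVec_x (a : F) (w : Fin 7 → F) :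
    x a *ᵥ w = ![w 1 + a * w 6, w 0 + a * w 6, w 3, w 2, w 5 - w 6, w 4 - w 6, -w 6] := by
  ext i
  fin_cases i <;> simp [x, mulVec, dotProduct, Fin.sum_univ_seven] <;> ring

theorem mulVec_y (a b : F) (w : Fin 7 → F) :
    y a b *ᵥ w = ![w 0 - w 2 - w 4 + (a + b - 1) * w 6, -w 2, w 1 - w 2, -w 4, w 3 - w 4, -w 6,
      w 5 - w 6] := by
  ext i
  fin_cases i <;> simp [y, mulVec, dotProduct, Fin.sum_univ_seven] <;> ring

theorem mulVec_y_eq_smul_iff {a b d : F} {u : Fin 7 → F} :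
    y a b *ᵥ u = d • u ↔ u 0 - u 2 - u 4 + (a + b - 1) * u 6 = d * u 0 ∧ -u 2 = d * u 1 ∧
      u 1 - u 2 = d * u 2 ∧ -u 4 = d * u 3 ∧ u 3 - u 4 = d * u 4 ∧ -u 6 = d * u 5 ∧
      u 5 - u 6 = d * u 6 := by
  simp [mulVec_y, funext_iff, Fin.forall_fin_succ]

theorem eq_single_of_mulVec_y_eq_smul {a b d : F} {w : Fin 7 → F} (hw : y a b *ᵥ w = d • w)
    (hd : 1 + d + d ^ 2 ≠ 0) : w = Pi.single 0 (w 0) := by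
  obtain ⟨-, e1, e2, e3, e4, e5, e6⟩ := mulVec_y_eq_smul_iff.1 hw
  have h1 : w 1 = 0 := (mul_eq_zero.1 (by linear_combination e2 - (1 + d) * e1)).resolve_right hd
  have h3 : w 3 = 0 := (mul_eq_zero.1 (by linear_combination e4 - (1 + d) * e3)).resolve_right hd
  have h5 : w 5 = 0 := (mul_eq_zero.1 (by linear_combination e6 - (1 + d) * e5)).resolve_right hd
  have h2 : w 2 = 0 := by linear_combination -e1 - d * h1
  have h4 : w 4 = 0 := by linear_combination -e3 - d * h3
  have h6 : w 6 = 0 := by linear_combination -e5 - d * h5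
  ext j
  fin_cases j <;> simp [h1, h2, h3, h4, h5, h6]

theorem eq_zero_of_mulVec_y_mulVec_x_single {a b e r : F}
    (h : y a b *ᵥ (x a *ᵥ Pi.single 0 r) = e • (x a *ᵥ Pi.single 0 r)) : r = 0 := by
  rw [mulVec_x, mulVec_y] at h
  simpa using congrFun h 2

theorem eq_zero_or_of_cube_roots {a b d e : F} {w : Fin 7 → F} (hd : 1 + d + d ^ 2 = 0)
    (he : 1 + e + e ^ 2 = 0) (hw : y a b *ᵥ w = d • w)
    (hxw : y a b *ᵥ (x a *ᵥ w) = e • (x a *ᵥ w)) :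
    w = 0 ∨
      (-1 + d + d * e + b * e + a * d * e = 0 ∧ a + a * e - e - d - 2 * d * e - b * e = 0) := by
  obtain ⟨e0, e1, e2, e3, e4, e5, e6⟩ := mulVec_y_eq_smul_iff.1 hw
  rw [mulVec_x] at hxw
  obtain ⟨f0, f1, f2, f3, f4, f5, f6⟩ := mulVec_y_eq_smul_iff.1 hxw
  simp only [Matrix.cons_val] at f0 f1 f2 f3 f4 f5 f6
  have hd0 : d ≠ 0 := by rintro rfl; norm_num at hd
  have he0 : e ≠ 0 := by rintro rfl; norm_num at he
  have h5 : w 5 = -e * d ^ 2 * w 1 := by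
    linear_combination w 5 * hd + d * f3 + d * e5 - d * e * e1
  have h3 : w 3 = e ^ 2 * d ^ 2 * w 1 := by
    refine mul_left_cancel₀ (mul_ne_zero he0 hd0) ?_
    linear_combination f5 + e5 + e * e5 - e * e3 + d * (1 + e) * h5 - e * d ^ 3 * w 1 * he
  have h0 : w 0 = -e * (d ^ 2 + a) * w 1 := by
    refine mul_left_cancel₀ he0 ?_
    linear_combination -f1 - h3 + a * e * e5 + a * e * d * h5 - a * e ^ 2 * w 1 * (d - 1) * hd
  by_cases h1 : w 1 = 0
  · left
    simp only [h1, mul_zero] at h0 h3 h5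
    have h2 : w 2 = 0 := by linear_combination -e1 - d * h1
    have h4 : w 4 = 0 := by linear_combination -e3 - d * h3
    have h6 : w 6 = 0 := by linear_combination -e5 - d * h5
    ext j
    fin_cases j <;> simp [h0, h1, h2, h3, h4, h5, h6]
  · right
    constructor
    · refine (mul_eq_zero.1 ?_).resolve_right h1
      linear_combination e0 - (1 - d) * h0 - e1 - e3 - d * h3 + (a + b - 1) * e5
        - (d - b * d - a * d) * h5
        - w 1 * (-e - e ^ 2 + d * e ^ 2 - b * e + b * d * e - a * e + a * d * e) * hd - w 1 * he
    · refine (mul_eq_zero.1 ?_).resolve_right h1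
      linear_combination f0 + h3 + (2 - b - a * e) * e5 - (-1 - 2 * d + b * d + a * d * e) * h5
        - w 1 * (-e - e ^ 2 + 2 * d * e + b * e - b * d * e + a * e ^ 2 - a * d * e ^ 2) * hd
        - w 1 * (1 + d - a) * he

theorem condition_i_or_ii_eq_zero_of_cube_roots {a b d e : F} (hd : 1 + d + d ^ 2 = 0)
    (he : 1 + e + e ^ 2 = 0) (h1 : -1 + d + d * e + b * e + a * d * e = 0)
    (h2 : a + a * e - e - d - 2 * d * e - b * e = 0) :
    a ^ 2 - a * b + b ^ 2 + 2 * a + 2 * b + 4 = 0 ∨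
      (a + b) ^ 3 - 8 * (a + b - 2) ^ 2 - 8 * (a * b) = 0 := by
  have hde : (d - e) * (1 + d + e) = 0 := by linear_combination hd - he
  rcases mul_eq_zero.1 hde with hde | hde
  · left
    have h : a * d + 2 * d + b + 2 = 0 := by
      linear_combination d ^ 2 * h1 + (d ^ 3 + b * d ^ 2 + a * d ^ 3) * hde
        + (2 - d ^ 2 + b - b * d + a * d - a * d ^ 2) * hd
    linear_combination (a + 2) ^ 2 * hd + (b - a - d * (a + 2)) * h
  · have h1' : a + d - b - b * d = 0 := by
      linear_combination h1 - (d + b + a * d) * hde + (1 + a) * hd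
    have h2' : -1 + b + b * d - a * d = 0 := by
      linear_combination h2 - (-1 - 2 * d - b + a) * hde - 2 * hd
    rcases mul_eq_zero.1 (show (a - 1) * (1 - d) = 0 by linear_combination h1' + h2') with ha | hd1
    · rcases mul_eq_zero.1 (show (1 + d) * (1 - b) = 0 by linear_combination h1' - ha) with hd1 | hb
      · exact absurd (by linear_combination hd - d * hd1 : (1 : F) = 0) one_ne_zero
      · right
        obtain rfl : a = 1 := by linear_combination ha
        obtain rfl : b = 1 := by linear_combination -hb
        norm_num
    · left
      have h3 : (3 : F) = 0 := by linear_combination hd + (d + 2) * hd1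
      have hab : a + 1 - 2 * b = 0 := by linear_combination h1' + (1 - b) * hd1
      linear_combination (b ^ 2 + b + 1) * h3 + (a + b + 1) * hab

theorem x_mulVec_x (a : F) (w : Fin 7 → F) : x a *ᵥ (x a *ᵥ w) = w := by
  rw [mulVec_mulVec, ← sq, x_sq, one_mulVec]

theorem eq_zero_of_mulVec_y_eq_smul {a b d e : F}
    (hi : a ^ 2 - a * b + b ^ 2 + 2 * a + 2 * b + 4 ≠ 0)
    (hii : (a + b) ^ 3 - 8 * (a + b - 2) ^ 2 - 8 * (a * b) ≠ 0) {w : Fin 7 → F}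
    (hw : y a b *ᵥ w = d • w) (hxw : y a b *ᵥ (x a *ᵥ w) = e • (x a *ᵥ w)) : w = 0 := by
  -- If `1 + d + d ^ 2 ≠ 0`, then `w` lies on the line of `e₀`, which `x` maps to the line of
  -- `e₁`, which `y` does not preserve; symmetrically for `e` and `x w`.
  by_cases hd : 1 + d + d ^ 2 = 0
  · by_cases he : 1 + e + e ^ 2 = 0
    · refine (eq_zero_or_of_cube_roots hd he hw hxw).resolve_right ?_
      rintro ⟨h1, h2⟩
      exact (condition_i_or_ii_eq_zero_of_cube_roots hd he h1 h2).elim hi hii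
    · have hu := eq_single_of_mulVec_y_eq_smul hxw he
      rw [← x_mulVec_x a w, hu] at hw
      rw [← x_mulVec_x a w, hu, eq_zero_of_mulVec_y_mulVec_x_single hw, Pi.single_zero,
        mulVec_zero]
  · rw [eq_single_of_mulVec_y_eq_smul hw hd] at hxw ⊢
    rw [eq_zero_of_mulVec_y_mulVec_x_single hxw, Pi.single_zero]

theorem iterate_two_eq_id_of_isMonomial {a b : F}
    (hii : (a + b) ^ 3 - 8 * (a + b - 2) ^ 2 - 8 * (a * b) ≠ 0)
    {v : Module.Basis (Fin 7) F (Fin 7 → F)} {π : Fin 7 → Fin 7} {c : Fin 7 → F}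
    (hf : Module.End.IsMonomial (toLin' (x a * y a b)) v π c) (hc : ∀ i, c i ≠ 0)
    (hπ : Injective π) :
    π^[2] = id := by
  have hp : aeval (toLin' (x a * y a b)) (xyPoly a b) = 0 := by
    rw [show toLin' (x a * y a b) = toLinAlgEquiv' (x a * y a b) from rfl, aeval_algEquiv,
      AlgHom.comp_apply, aeval_x_mul_y, map_zero]
  funext i
  have hi := hπ.mem_periodicPts i
  obtain ⟨t, ht⟩ := hf.exists_sum_coeff_mul_pow_eq_zero hc hp (natDegree_xyPoly_lt a b) hi
  have h7 : minimalPeriod π i ≤ 7 := by simpa using minimalPeriod_le_card (f := π) (x := i)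
  have h2 : minimalPeriod π i ≤ 2 := by
    by_contra! h3
    exact not_forall_sum_coeff_xyPoly_eq_zero hii h3 h7 t ht
  have h0 := minimalPeriod_pos_of_mem_periodicPts hi
  refine isPeriodicPt_iff_minimalPeriod_dvd.2 ?_
  interval_cases minimalPeriod π i <;> norm_num

theorem iterate_relations_of_isMonomial {a b : F}
    (hii : (a + b) ^ 3 - 8 * (a + b - 2) ^ 2 - 8 * (a * b) ≠ 0)
    {v : Module.Basis (Fin 7) F (Fin 7 → F)} {σ τ : Fin 7 → Fin 7} {c d : Fin 7 → F}
    (hX : Module.End.IsMonomial (toLin' (x a)) v σ c)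
    (hY : Module.End.IsMonomial (toLin' (y a b)) v τ d) :
    σ^[2] = id ∧ τ^[3] = id ∧ (σ ∘ τ)^[2] = id := by
  have hXpow : toLin' (x a) ^ 2 = 1 := by rw [← toLin'_pow, x_sq, toLin'_one]; rfl
  have hYpow : toLin' (y a b) ^ 3 = 1 := by rw [← toLin'_pow, y_pow_three, toLin'_one]; rfl
  refine ⟨hX.iterate_eq_id hXpow, hY.iterate_eq_id hYpow, ?_⟩
  refine iterate_two_eq_id_of_isMonomial hii (by rw [toLin'_mul]; exact hX.mul hY)
    (fun i ↦ mul_ne_zero (hY.coeff_ne_zero_of_pow_eq_one three_ne_zero hYpow i)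
      (hX.coeff_ne_zero_of_pow_eq_one two_ne_zero hXpow (τ i))) ?_
  exact (hX.injective_of_pow_eq_one two_ne_zero hXpow).comp
    (hY.injective_of_pow_eq_one three_ne_zero hYpow)

end Dim7

open Dim7 in
/-- **The dimension-7 group is not monomial.** Let `F` be a field and `a, b ∈ F`
satisfying Conditions (i) and (ii), and let `x, y` be the matrices of the dimension-7
setup. There is no basis `(v₁, …, v₇)` of `F⁷` such that both `x` and `y` send each basis
vector to a scalar multiple of a basis vector. -/
theorem dim7_generators_not_monomial (F : Type) [Field F] (a b : F)
    (hi : a ^ 2 - a * b + b ^ 2 + 2 * a + 2 * b + 4 ≠ 0)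
    (hii : (a + b) ^ 3 - 8 * (a + b - 2) ^ 2 - 8 * (a * b) ≠ 0)
    (x y : Matrix (Fin 7) (Fin 7) F)
    (hx : x = !![0,1,0,0,0,0,a; 1,0,0,0,0,0,a; 0,0,0,1,0,0,0; 0,0,1,0,0,0,0;
      0,0,0,0,0,1,-1; 0,0,0,0,1,0,-1; 0,0,0,0,0,0,-1])
    (hy : y = !![1,0,-1,0,-1,0,a+b-1; 0,0,-1,0,0,0,0; 0,1,-1,0,0,0,0; 0,0,0,0,-1,0,0;
      0,0,0,1,-1,0,0; 0,0,0,0,0,0,-1; 0,0,0,0,0,1,-1]) :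
    ¬ ∃ v : Module.Basis (Fin 7) F (Fin 7 → F),
        (∀ i : Fin 7, ∃ (j : Fin 7) (c : F), x.mulVec (v i) = c • v j) ∧
        (∀ i : Fin 7, ∃ (j : Fin 7) (c : F), y.mulVec (v i) = c • v j) := by
  rintro ⟨v, hvx, hvy⟩
  change x = Dim7.x a at hx
  change y = Dim7.y a b at hy
  subst hx hy
  choose σ c hX using hvx
  choose τ d hY using hvy
  obtain ⟨hσ, hτ, hστ⟩ := iterate_relations_of_isMonomial hii (σ := σ) (c := c) hX hY
  obtain ⟨p, hp⟩ := exists_fixed_point_of_iterate_prime_eq_id (by simp) hτ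
  have hσp : τ (σ p) = σ p := by
    have h : σ (τ (σ (τ p))) = p := congrFun hστ p
    rw [hp] at h
    calc τ (σ p) = σ (σ (τ (σ p))) := (congrFun hσ _).symm
      _ = σ p := by rw [h]
  refine v.ne_zero p (eq_zero_of_mulVec_y_eq_smul hi hii (d := d p) (e := d (σ p)) ?_ ?_)
  · rw [hY p, hp]
  · rw [hX p, mulVec_smul, hY (σ p), hσp, smul_comm]
end
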